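/- Let 𝓔¹ = (E¹_1, …, E¹_k) be a partition of U, let x ∈ E¹_i, let j ≠ i, and let 𝓔² be the partition obtained from 𝓔¹ by moving x from the i-th part to the j-th part: E²_i = E¹_i \ {x}, E²_j = E¹_j ∪ {x}, and E²_p = E¹_p for all p ∉ {i, j}. Then L(𝓔²) − L(𝓔¹) = 2·(b(x, E¹_i) − b(x, E¹_j ∪ {x})). -/

import Mathlib

open Finset

variable {U : Type*} [Fintype U] [DecidableEq U]

/-- The belonging degree `b(x, A) = (1/l) Σ_{t=1}^l |c_t(x) ∩ A|`, where
`c_t(x) = {y ∈ U : y ~_t x}` is the equivalence class of `x` under the `t`-th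
base clustering `R t`. -/
noncomputable def bdeg {l : ℕ} (R : Fin l → U → U → Prop)
    [∀ t, DecidableRel (R t)] (x : U) (A : Finset U) : ℝ :=
  (1 / (l : ℝ)) *
    ∑ t : Fin l, (((Finset.univ.filter (fun y => R t y x)) ∩ A).card : ℝ)

/-- The loss of a partition `E : Fin k → Finset U`:
`L(𝓔) = Σ_{p=1}^k Σ_{y ∈ E_p} (n - b(y, E_p))`. -/
noncomputable def lossL {l k : ℕ} (R : Fin l → U → U → Prop)
    [∀ t, DecidableRel (R t)] (E : Fin k → Finset U) : ℝ :=
  ∑ p : Fin k, ∑ y ∈ E p, ((Fintype.card U : ℝ) - bdeg R y (E p))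

/-!
Removing `x` from a part `A` lowers `Σ_{y ∈ A} b(y, A)`, a (scaled) count of the related pairs
in `A × A`, by the pairs with `x` in one coordinate: by symmetry this is
`2 b(x, A) - b(x, {x})`. The terms `b(x, {x})` of the two parts touched by the move cancel.
-/

section

variable {l : ℕ} (R : Fin l → U → U → Prop) [∀ t, DecidableRel (R t)]

noncomputable def partLoss (A : Finset U) : ℝ :=
  ∑ y ∈ A, ((Fintype.card U : ℝ) - bdeg R y A)

theorem bdeg_empty (x : U) : bdeg R x ∅ = 0 := by
  simp [bdeg]

theorem bdeg_insert (x : U) {y : U} {B : Finset U} (hy : y ∉ B) :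
    bdeg R x (insert y B) = bdeg R x {y} + bdeg R x B := by
  have hcard : ∀ t : Fin l,
      ((univ.filter (fun z => R t z x) ∩ insert y B).card : ℝ)
        = (univ.filter (fun z => R t z x) ∩ {y}).card
          + (univ.filter (fun z => R t z x) ∩ B).card := by
    intro t
    rw [insert_eq, inter_union_distrib_left, card_union_of_disjoint]
    · push_cast; rfl
    · exact (disjoint_singleton_left.mpr hy).mono inter_subset_right inter_subset_right
  simp only [bdeg, hcard, sum_add_distrib, mul_add]

theorem bdeg_eq_sum_bdeg_singleton (x : U) (B : Finset U) :
    bdeg R x B = ∑ y ∈ B, bdeg R x {y} := by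
  induction B using Finset.induction_on with
  | empty => simp [bdeg_empty]
  | insert y B hy ih => rw [bdeg_insert R x hy, sum_insert hy, ih]

theorem bdeg_singleton_comm (hR : ∀ t, Std.Symm (R t)) (x y : U) :
    bdeg R x {y} = bdeg R y {x} := by
  have hcard : ∀ t : Fin l, (univ.filter (fun z => R t z x) ∩ {y}).card
      = (univ.filter (fun z => R t z y) ∩ {x}).card := by
    intro t
    simp only [inter_singleton, mem_filter, mem_univ, true_and, Std.Symm.iff (r := R t) x y]
    split_ifs <;> rfl
  simp only [bdeg, hcard]

theorem sum_bdeg_insert (hR : ∀ t, Std.Symm (R t)) {x : U} {B : Finset U} (hx : x ∉ B) :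
    ∑ y ∈ insert x B, bdeg R y (insert x B)
      = ∑ y ∈ B, bdeg R y B + 2 * bdeg R x (insert x B) - bdeg R x {x} := by
  have hB : ∑ y ∈ B, bdeg R y {x} = bdeg R x B := by
    rw [bdeg_eq_sum_bdeg_singleton R x B]
    exact sum_congr rfl fun y _ => bdeg_singleton_comm R hR y x
  rw [sum_insert hx, bdeg_insert R x hx]
  simp only [bdeg_insert R _ hx, sum_add_distrib, hB]
  ring

theorem partLoss_insert (hR : ∀ t, Std.Symm (R t)) {x : U} {B : Finset U} (hx : x ∉ B) :
    partLoss R (insert x B)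
      = partLoss R B + Fintype.card U - 2 * bdeg R x (insert x B) + bdeg R x {x} := by
  simp only [partLoss, sum_sub_distrib, sum_const, card_insert_of_notMem hx,
    sum_bdeg_insert R hR hx, nsmul_eq_mul]
  push_cast
  ring

theorem lossL_sub_eq_of_eq_off_pair {k : ℕ} {E E' : Fin k → Finset U} {i j : Fin k}
    (hij : j ≠ i) (hE : ∀ p, p ≠ i → p ≠ j → E' p = E p) :
    lossL R E' - lossL R E
      = (partLoss R (E' i) - partLoss R (E i)) + (partLoss R (E' j) - partLoss R (E j)) := by
  rw [lossL, lossL, ← sum_sub_distrib]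
  exact Fintype.sum_eq_add i j hij.symm fun p ⟨hpi, hpj⟩ => by simp [hE p hpi hpj]

end

theorem loss_diff_of_move_general {l k : ℕ}
    (R : Fin l → U → U → Prop) [∀ t, DecidableRel (R t)]
    (hR : ∀ t, Equivalence (R t))
    (E1 : Fin k → Finset U)
    (hdisj : ∀ p q, p ≠ q → Disjoint (E1 p) (E1 q))
    (x : U) (i j : Fin k) (hx : x ∈ E1 i) (hij : j ≠ i)
    (E2 : Fin k → Finset U)
    (hE2i : E2 i = (E1 i).erase x)
    (hE2j : E2 j = insert x (E1 j))
    (hE2 : ∀ p, p ≠ i → p ≠ j → E2 p = E1 p) :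
    lossL R E2 - lossL R E1
      = 2 * (bdeg R x (E1 i) - bdeg R x (insert x (E1 j))) := by
  have hsymm : ∀ t, Std.Symm (R t) := fun t => (hR t).stdSymm
  have hxj : x ∉ E1 j := disjoint_left.mp (hdisj i j hij.symm) hx
  have hi := partLoss_insert R hsymm (notMem_erase x (E1 i))
  rw [insert_erase hx] at hi
  have hj := partLoss_insert R hsymm hxj
  rw [lossL_sub_eq_of_eq_off_pair R hij hE2, hE2i, hE2j]
  linarith

/-- Moving `x` from the `i`-th part to the `j`-th part changes the loss by
`L(𝓔²) - L(𝓔¹) = 2·(b(x, E¹_i) - b(x, E¹_j ∪ {x}))`. -/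
theorem loss_diff_of_move {l k : ℕ} (hl : 1 ≤ l)
    (R : Fin l → U → U → Prop) [∀ t, DecidableRel (R t)]
    (hR : ∀ t, Equivalence (R t))
    (E1 : Fin k → Finset U)
    (hdisj : ∀ p q, p ≠ q → Disjoint (E1 p) (E1 q))
    (hcover : (Finset.univ : Finset (Fin k)).biUnion E1 = Finset.univ)
    (x : U) (i j : Fin k) (hx : x ∈ E1 i) (hij : j ≠ i)
    (E2 : Fin k → Finset U)
    (hE2i : E2 i = (E1 i).erase x)
    (hE2j : E2 j = insert x (E1 j))
    (hE2 : ∀ p, p ≠ i → p ≠ j → E2 p = E1 p) :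
    lossL R E2 - lossL R E1
      = 2 * (bdeg R x (E1 i) - bdeg R x (insert x (E1 j))) :=
  loss_diff_of_move_general R hR E1 hdisj x i j hx hij E2 hE2i hE2j hE2
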